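/- arXiv:2005.04273 — 6 statements merged into one kernel-verified Lean document; each statement's English description precedes it below -/
import Mathlib

section
/- In a weakly associative algebra (A,∗), for each X ∈ A the map Y ↦ X∗Y − Y∗X is a derivation of (A,∗). Conversely, if Y ↦ X∗Y − Y∗X is a derivation for every X ∈ A, then (A,∗) is weakly associative. -/
variable {K A : Type*} [Field K] [CharZero K] [AddCommGroup A] [Module K A]

/-- The associator of a bilinear multiplication. -/
def assoc (m : A →ₗ[K] A →ₗ[K] A) (X Y Z : A) : A := m X (m Y Z) - m (m X Y) Z

/-- Weak associativity. -/
def WeaklyAssoc (m : A →ₗ[K] A →ₗ[K] A) : Prop :=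
  ∀ X Y Z : A, assoc m X Y Z + assoc m Y Z X - assoc m Y X Z = 0

/-- `f` is a derivation of the algebra `(A, m)`. -/
def IsDerivation (m : A →ₗ[K] A →ₗ[K] A) (f : A →ₗ[K] A) : Prop :=
  ∀ X Y : A, f (m X Y) = m (f X) Y + m X (f Y)

theorem derivation_iff_weaklyAssoc (m : A →ₗ[K] A →ₗ[K] A) :
    (∀ X : A, IsDerivation m (m X - (m.flip) X)) ↔ WeaklyAssoc m := by
  constructor
  · intro h X Y Z
    have := h X Y Z
    simp only [LinearMap.sub_apply, LinearMap.flip_apply, map_sub, LinearMap.sub_apply] at this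
    simp only [assoc]
    rw [sub_eq_zero]
    linear_combination (norm := abel) this
  · intro h X
    intro Y Z
    have := h X Y Z
    simp only [assoc] at this
    simp only [LinearMap.sub_apply, LinearMap.flip_apply, map_sub, LinearMap.sub_apply]
    linear_combination (norm := abel) this
end

section
/- Every weakly associative algebra is Lie admissible: if (A,∗) is weakly associative, then the bracket [X,Y] = X∗Y − Y∗X satisfies the Jacobi identity (and is antisymmetric), hence defines a Lie algebra structure on A. -/
variable {K A : Type*} [Field K] [CharZero K] [AddCommGroup A] [Module K A]

theorem weaklyAssoc_lieAdmissible (m : A →ₗ[K] A →ₗ[K] A)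
    (h : WeaklyAssoc m) :
    (∀ X Y : A, (m X Y - m Y X) = -(m Y X - m X Y)) ∧
    (∀ X Y Z : A,
      (m (m X Y - m Y X) Z - m Z (m X Y - m Y X)) +
      (m (m Y Z - m Z Y) X - m X (m Y Z - m Z Y)) +
      (m (m Z X - m X Z) Y - m Y (m Z X - m X Z)) = 0) := by
  constructor
  · intro X Y; abel
  · intro X Y Z
    have h1 := h X Y Z
    have h2 := h Y Z X
    have h3 := h Z X Y
    have h4 := h X Z Y
    have h5 := h Z Y X
    have h6 := h Y X Z
    have e : (m (m X Y - m Y X) Z - m Z (m X Y - m Y X)) +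
      (m (m Y Z - m Z Y) X - m X (m Y Z - m Z Y)) +
      (m (m Z X - m X Z) Y - m Y (m Z X - m X Z)) =
      ((3:K)⁻¹) • ((assoc m X Z Y + assoc m Z Y X - assoc m Z X Y) +
        (assoc m Z Y X + assoc m Y X Z - assoc m Y Z X) +
        (assoc m Y X Z + assoc m X Z Y - assoc m X Y Z) -
        (assoc m X Y Z + assoc m Y Z X - assoc m Y X Z) -
        (assoc m Y Z X + assoc m Z X Y - assoc m Z Y X) -
        (assoc m Z X Y + assoc m X Y Z - assoc m X Z Y)) := by
      simp only [assoc, map_sub, LinearMap.sub_apply]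
      module
    rw [e, h1, h2, h3, h4, h5, h6]
    simp
end

section
/- Every weakly associative algebra is flexible: if (A,∗) is weakly associative, then X∗(Y∗X) = (X∗Y)∗X for all X,Y ∈ A. -/
variable {K A : Type*} [Field K] [CharZero K] [AddCommGroup A] [Module K A]

theorem weaklyAssoc_flexible (m : A →ₗ[K] A →ₗ[K] A)
    (h : WeaklyAssoc m) :
    ∀ X Y : A, m X (m Y X) = m (m X Y) X := by
  intro X Y
  have hx := h X Y X
  simp only [assoc] at hx
  rw [← sub_eq_zero]
  abel_nf at hx ⊢
  exact hx
end

section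
/- If (P,•,{,}) is a nonassociative Poisson algebra, then the multiplication X∗Y = X•Y + {X,Y} is weakly associative, i.e., its associator A_∗ satisfies A_∗(X,Y,Z) + A_∗(Y,Z,X) − A_∗(Y,X,Z) = 0 for all X,Y,Z. -/
variable {K A : Type*} [Field K] [CharZero K] [AddCommGroup A] [Module K A]

theorem poisson_to_weaklyAssoc (b br : A →ₗ[K] A →ₗ[K] A)
    (hcomm : ∀ X Y : A, b X Y = b Y X)
    (hskew : ∀ X Y : A, br X Y = -br Y X)
    (hjac : ∀ X Y Z : A, br (br X Y) Z + br (br Y Z) X + br (br Z X) Y = 0)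
    (hleib : ∀ X Y Z : A, br (b X Y) Z = b X (br Y Z) + b (br X Z) Y) :
    WeaklyAssoc (b + br) := by
  have d2 : ∀ U V W : A, b (br U V) W = -(b (br V U) W) := fun U V W => by
    rw [hskew U V, map_neg, LinearMap.neg_apply]
  have d4 : ∀ U V W : A, br (br U V) W = -(br (br V U) W) := fun U V W => by
    rw [hskew U V, map_neg, LinearMap.neg_apply]
  have d5 : ∀ U V W : A, b (b U V) W = b (b V U) W := fun U V W => by rw [hcomm U V]
  intro X Y Z
  simp only [assoc, LinearMap.add_apply, map_add]
  linear_combination (norm := abel1)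
    -hleib X Y Z + hleib Y X Z - (2 : ℤ) • hleib Y Z X + hleib X Z Y - hleib Z X Y
    + hcomm X (b Y Z) + hskew X (b Y Z) + hskew X (br Y Z) + hcomm X (br Z Y)
    - hcomm Y (b X Z) - hskew Y (b X Z) + hcomm Y (b Z X) + hskew Y (b Z X)
    - hskew Y (br X Z) - hcomm Y (br Z X) + hskew Y (br Z X)
    - hcomm Z (br X Y) - (2 : ℤ) • hjac X Y Z
    - d2 X Y Z + d4 X Y Z - d5 X Y Z - d2 X Z Y + d4 X Z Y - d5 X Z Y
end

section
/- If (P,∗) is a weakly associative algebra, then its polarization, given by X•Y = X∗Y + Y∗X and {X,Y} = X∗Y − Y∗X, is a nonassociative Poisson algebra: • is commutative, {,} is a Lie bracket, and {X•Y,Z} = X•{Y,Z} + {X,Z}•Y for all X,Y,Z. -/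
variable {K A : Type*} [Field K] [CharZero K] [AddCommGroup A] [Module K A]

/-- Symmetrized (polarized) product. -/
def pb (m : A →ₗ[K] A →ₗ[K] A) (X Y : A) : A := m X Y + m Y X

/-- Antisymmetrized (polarized) bracket. -/
def pbr (m : A →ₗ[K] A →ₗ[K] A) (X Y : A) : A := m X Y - m Y X

theorem weaklyAssoc_polarization (m : A →ₗ[K] A →ₗ[K] A)
    (h : WeaklyAssoc m) :
    (∀ X Y : A, pb m X Y = pb m Y X) ∧
    (∀ X Y : A, pbr m X Y = -pbr m Y X) ∧
    (∀ X Y Z : A,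
      pbr m (pbr m X Y) Z + pbr m (pbr m Y Z) X + pbr m (pbr m Z X) Y = 0) ∧
    (∀ X Y Z : A,
      pbr m (pb m X Y) Z = pb m X (pbr m Y Z) + pb m (pbr m X Z) Y) := by
  refine ⟨fun X Y => by unfold pb; abel, fun X Y => by unfold pbr; abel, ?_, ?_⟩
  · intro X Y Z
    have h1 := h X Y Z
    have h2 := h X Z Y
    simp only [WeaklyAssoc, assoc] at h1 h2
    simp only [pbr, map_sub, map_add, LinearMap.sub_apply, LinearMap.add_apply]
    linear_combination (norm := abel) -h1 + h2
  · intro X Y Z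
    have h1 := h X Y Z
    have h2 := h X Z Y
    have h3 := h Z X Y
    simp only [WeaklyAssoc, assoc] at h1 h2 h3
    simp only [pbr, pb, map_sub, map_add, LinearMap.sub_apply, LinearMap.add_apply]
    linear_combination (norm := abel) h1 - h2 - 2 • h3
end

section
/- The 2-dimensional algebra on K² with basis (e₁,e₂) and multiplication e₁e₁ = (a/2)e₁, e₁e₂ = ((a+2)/4)e₂, e₂e₁ = ((a−2)/4)e₂, e₂e₂ = 0 (for a parameter a ∈ K) is weakly associative for every a, and it is associative if and only if a = 2 or a = −2. -/
variable {K : Type*} [Field K] [CharZero K]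

/-- The multiplication on `K²` with parameter `a`:
`e₁e₁ = (a/2)e₁`, `e₁e₂ = ((a+2)/4)e₂`, `e₂e₁ = ((a−2)/4)e₂`, `e₂e₂ = 0`. -/
def mulA (a : K) (X Y : K × K) : K × K :=
  (a / 2 * (X.1 * Y.1), (a + 2) / 4 * (X.1 * Y.2) + (a - 2) / 4 * (X.2 * Y.1))

/-- Associator of `mulA a`. -/
def assocA (a : K) (X Y Z : K × K) : K × K :=
  mulA a X (mulA a Y Z) - mulA a (mulA a X Y) Z

theorem mulA_weaklyAssoc_and_assoc_iff (a : K) :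
    (∀ X Y Z : K × K, assocA a X Y Z + assocA a Y Z X - assocA a Y X Z = 0) ∧
    ((∀ X Y Z : K × K, assocA a X Y Z = 0) ↔ (a = 2 ∨ a = -2)) := by
  constructor
  · intro X Y Z
    simp only [assocA, mulA, Prod.ext_iff, Prod.fst_add, Prod.snd_add, Prod.fst_sub,
      Prod.snd_sub, Prod.fst_zero, Prod.snd_zero]
    constructor <;> ring
  · constructor
    · intro h
      have h1 := h (1, 0) (1, 0) (0, 1)
      simp only [assocA, mulA, Prod.ext_iff, Prod.fst_sub, Prod.snd_sub, Prod.fst_zero,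
        Prod.snd_zero, mul_one, mul_zero, one_mul, zero_mul, add_zero, zero_add] at h1
      have h3 : (a + 2) * (a - 2) = 0 := by
        linear_combination (-16 : K) * h1.2
      rcases mul_eq_zero.mp h3 with h | h
      · right; linear_combination h
      · left; linear_combination h
    · rintro (rfl | rfl) X Y Z <;>
        simp only [assocA, mulA, Prod.ext_iff, Prod.fst_sub, Prod.snd_sub, Prod.fst_zero,
          Prod.snd_zero] <;> constructor <;> ring
end
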